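/- Let K be a field of characteristic different from 2, and let (y₀, y₁, y₂, y₃, x₀, x₁, x₂, x₃) ∈ K⁸ be a nonzero vector satisfying y₀² = 2(x₀x₃ + x₁x₂), y₁² = 2(x₀x₃ − x₁x₂), y₂² = 2(x₀x₂ − x₁x₃), y₃² = 2(x₀x₂ + x₁x₃). Then the 4 × 8 Jacobian matrix of the four polynomials Y₀² − 2(X₀X₃ + X₁X₂), Y₁² − 2(X₀X₃ − X₁X₂), Y₂² − 2(X₀X₂ − X₁X₃), Y₃² − 2(X₀X₂ + X₁X₃) evaluated at this vector has rank strictly less than 4 if and only if y₀ = y₁ = y₂ = y₃ = 0 and (x₀ = x₁ = 0 or x₂ = x₃ = 0). In other words, the singular locus of the Satake model Z consists exactly of the two lines L_{0,1} : Y₀ = Y₁ = Y₂ = Y₃ = X₀ = X₁ = 0 and L_{2,3} : Y₀ = Y₁ = Y₂ = Y₃ = X₂ = X₃ = 0. -/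

import Mathlib

/-!
If `c` is a relation between the rows of the Jacobian, then `yᵢ cᵢ = 0` for each `i` and `c` kills
the `X`-columns. When `y₀ ≠ 0`, we get `c₀ = 0` and `q₀ = x₀x₃ + x₁x₂ = y₀²/2 ≠ 0`, and the
`X`-columns become two `2 × 2` systems in `(c₁, c₂ + c₃)` and `(c₁, c₂ - c₃)` with determinant `q₀`,
so `c = 0`; the other `yᵢ` follow by symmetry. Hence at a singular point all `yᵢ` vanish, so the
four quadrics vanish, so `x₀x₂ = x₀x₃ = x₁x₂ = x₁x₃ = 0`, which cuts out the two lines.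
Conversely, on either line only two columns of the Jacobian are nonzero.
-/


open Matrix

section Rank

variable {K m n : Type*} [Field K] [Fintype m] [Fintype n]

theorem Matrix.exists_vecMul_eq_zero_of_rank_lt {M : Matrix m n K}
    (h : M.rank < Fintype.card m) : ∃ c ≠ 0, c ᵥ* M = 0 := by
  have hnotinj : ¬ Function.Injective M.vecMul := fun hinj =>
    h.ne (vecMul_injective_iff.mp hinj).rank_matrix
  rw [← coe_vecMulLinear, injective_iff_map_eq_zero] at hnotinj
  push Not at hnotinj
  obtain ⟨c, hc, hc0⟩ := hnotinj
  exact ⟨c, hc0, hc⟩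

theorem Matrix.rank_le_card_of_col_support_subset (M : Matrix m n K) (s : Finset n)
    (hs : Function.support M.col ⊆ s) : M.rank ≤ s.card :=
  M.rank_transpose ▸ Mᵀ.rank_le_card_of_support_subset s hs

end Rank

namespace Satake

variable {K : Type*} [Field K]

def jacobian (y₀ y₁ y₂ y₃ x₀ x₁ x₂ x₃ : K) : Matrix (Fin 4) (Fin 8) K :=
  !![2 * y₀, 0, 0, 0, -2 * x₃, -2 * x₂, -2 * x₁, -2 * x₀;
     0, 2 * y₁, 0, 0, -2 * x₃, 2 * x₂, 2 * x₁, -2 * x₀;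
     0, 0, 2 * y₂, 0, -2 * x₂, 2 * x₃, -2 * x₀, 2 * x₁;
     0, 0, 0, 2 * y₃, -2 * x₂, -2 * x₃, -2 * x₀, -2 * x₁]

/-- `(c₀, c₁, c₂, c₃)` kills the four `X`-columns of the Jacobian (divided by `-2`). -/
def XKernel (x₀ x₁ x₂ x₃ c₀ c₁ c₂ c₃ : K) : Prop :=
  x₃ * (c₀ + c₁) + x₂ * (c₂ + c₃) = 0 ∧ x₂ * (c₀ - c₁) - x₃ * (c₂ - c₃) = 0 ∧
    x₁ * (c₀ - c₁) + x₀ * (c₂ + c₃) = 0 ∧ x₀ * (c₀ + c₁) - x₁ * (c₂ - c₃) = 0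

variable {y₀ y₁ y₂ y₃ x₀ x₁ x₂ x₃ c₀ c₁ c₂ c₃ : K}

theorem vecMul_jacobian_eq_zero (two : (2 : K) ≠ 0) {c : Fin 4 → K}
    (hc : c ᵥ* jacobian y₀ y₁ y₂ y₃ x₀ x₁ x₂ x₃ = 0) :
    (y₀ * c 0 = 0 ∧ y₁ * c 1 = 0 ∧ y₂ * c 2 = 0 ∧ y₃ * c 3 = 0) ∧
      XKernel x₀ x₁ x₂ x₃ (c 0) (c 1) (c 2) (c 3) := by
  have col (j : Fin 8) : ∑ i, c i * jacobian y₀ y₁ y₂ y₃ x₀ x₁ x₂ x₃ i j = 0 := congrFun hc j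
  simp only [Fin.forall_fin_succ, Fin.sum_univ_four, IsEmpty.forall_iff] at col
  simp only [Fin.isValue, jacobian, neg_mul, of_apply, cons_val', cons_val_zero, cons_val_fin_one,
    cons_val_one, mul_zero, add_zero, cons_val, Fin.succ_zero_eq_one, zero_add, Fin.succ_one_eq_two,
    Fin.reduceSucc, mul_neg, and_true] at col
  obtain ⟨e₀, e₁, e₂, e₃, e₄, e₅, e₆, e₇⟩ := col
  refine ⟨⟨?_, ?_, ?_, ?_⟩, ?_, ?_, ?_, ?_⟩ <;> refine (mul_eq_zero_iff_left two).mp ?_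
  exacts [by linear_combination e₀, by linear_combination e₁, by linear_combination e₂,
    by linear_combination e₃, by linear_combination -e₄, by linear_combination -e₅,
    by linear_combination -e₆, by linear_combination -e₇]

/- The symmetries `X₁ ↦ -X₁` and `X₂ ↔ X₃` of `Z` permute the `Yᵢ` transitively, so they reduce
every case to `y₀ ≠ 0`. -/
theorem XKernel.neg_x₁ (hk : XKernel x₀ x₁ x₂ x₃ c₀ c₁ c₂ c₃) :
    XKernel x₀ (-x₁) x₂ x₃ c₁ c₀ c₃ c₂ := by
  obtain ⟨e₄, e₅, e₆, e₇⟩ := hk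
  exact ⟨by linear_combination e₄, by linear_combination -e₅, by linear_combination e₆,
    by linear_combination e₇⟩

theorem XKernel.swap_x₂_x₃ (hk : XKernel x₀ x₁ x₂ x₃ c₀ c₁ c₂ c₃) :
    XKernel x₀ x₁ x₃ x₂ c₃ c₂ c₁ c₀ := by
  obtain ⟨e₄, e₅, e₆, e₇⟩ := hk
  exact ⟨by linear_combination e₄, by linear_combination e₅, by linear_combination e₇,
    by linear_combination e₆⟩

theorem XKernel.eq_zero (two : (2 : K) ≠ 0) {y : K} (hy : y ≠ 0)
    (hy2 : y ^ 2 = 2 * (x₀ * x₃ + x₁ * x₂)) (hyc : y * c₀ = 0)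
    (hk : XKernel x₀ x₁ x₂ x₃ c₀ c₁ c₂ c₃) : c₀ = 0 ∧ c₁ = 0 ∧ c₂ = 0 ∧ c₃ = 0 := by
  obtain ⟨e₄, e₅, e₆, e₇⟩ := hk
  have hD : x₀ * x₃ + x₁ * x₂ ≠ 0 := fun hD =>
    hy (pow_eq_zero_iff two_ne_zero |>.mp (by rw [hy2, hD, mul_zero]))
  have hc₀ : c₀ = 0 := (mul_eq_zero_iff_left hy).mp hyc
  subst hc₀
  have hc₁ : c₁ = 0 := (mul_eq_zero_iff_left hD).mp (by linear_combination x₀ * e₄ - x₂ * e₆)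
  have hu : c₂ + c₃ = 0 := (mul_eq_zero_iff_left hD).mp (by linear_combination x₁ * e₄ + x₃ * e₆)
  have hv : c₂ - c₃ = 0 :=
    (mul_eq_zero_iff_left hD).mp (by linear_combination -x₀ * e₅ - x₂ * e₇)
  have hc₂ : c₂ = 0 := (mul_eq_zero_iff_left two).mp (by linear_combination hu + hv)
  exact ⟨rfl, hc₁, hc₂, by linear_combination hu - hc₂⟩

theorem y_eq_zero_of_vecMul_jacobian_eq_zero (two : (2 : K) ≠ 0)
    (h0 : y₀ ^ 2 = 2 * (x₀ * x₃ + x₁ * x₂)) (h1 : y₁ ^ 2 = 2 * (x₀ * x₃ - x₁ * x₂))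
    (h2 : y₂ ^ 2 = 2 * (x₀ * x₂ - x₁ * x₃)) (h3 : y₃ ^ 2 = 2 * (x₀ * x₂ + x₁ * x₃))
    {c : Fin 4 → K} (hc0 : c ≠ 0) (hc : c ᵥ* jacobian y₀ y₁ y₂ y₃ x₀ x₁ x₂ x₃ = 0) :
    y₀ = 0 ∧ y₁ = 0 ∧ y₂ = 0 ∧ y₃ = 0 := by
  obtain ⟨⟨hyc₀, hyc₁, hyc₂, hyc₃⟩, hk⟩ := vecMul_jacobian_eq_zero two hc
  have hc0' : ¬(c 0 = 0 ∧ c 1 = 0 ∧ c 2 = 0 ∧ c 3 = 0) := fun ⟨_, _, _, _⟩ =>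
    hc0 (funext fun i => by fin_cases i <;> assumption)
  refine ⟨?_, ?_, ?_, ?_⟩ <;> by_contra hy <;> refine hc0' ?_
  · exact hk.eq_zero two hy h0 hyc₀
  · obtain ⟨_, _, _, _⟩ := hk.neg_x₁.eq_zero two hy (by linear_combination h1) hyc₁
    tauto
  · obtain ⟨_, _, _, _⟩ := hk.neg_x₁.swap_x₂_x₃.eq_zero two hy (by linear_combination h2) hyc₂
    tauto
  · obtain ⟨_, _, _, _⟩ := hk.swap_x₂_x₃.eq_zero two hy (by linear_combination h3) hyc₃
    tauto

theorem x_on_lines_of_quadrics_eq_zero (two : (2 : K) ≠ 0)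
    (h0 : 2 * (x₀ * x₃ + x₁ * x₂) = 0) (h1 : 2 * (x₀ * x₃ - x₁ * x₂) = 0)
    (h2 : 2 * (x₀ * x₂ - x₁ * x₃) = 0) (h3 : 2 * (x₀ * x₂ + x₁ * x₃) = 0) :
    (x₀ = 0 ∧ x₁ = 0) ∨ (x₂ = 0 ∧ x₃ = 0) := by
  have h4 : (2 * 2 : K) ≠ 0 := mul_ne_zero two two
  have h03 : 2 * 2 * (x₀ * x₃) = 0 := by linear_combination h0 + h1
  have h12 : 2 * 2 * (x₁ * x₂) = 0 := by linear_combination h0 - h1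
  have h02 : 2 * 2 * (x₀ * x₂) = 0 := by linear_combination h2 + h3
  have h13 : 2 * 2 * (x₁ * x₃) = 0 := by linear_combination h3 - h2
  simp only [mul_eq_zero_iff_left h4, mul_eq_zero] at h03 h12 h02 h13
  tauto

theorem rank_jacobian_line₀₁_le (x₂ x₃ : K) : (jacobian 0 0 0 0 0 0 x₂ x₃).rank ≤ 2 :=
  rank_le_card_of_col_support_subset _ {4, 5} <| Function.support_subset_iff'.mpr fun j hj => by
    fin_cases j <;> simp at hj ⊢ <;> ext i <;> fin_cases i <;> simp [jacobian]

theorem rank_jacobian_line₂₃_le (x₀ x₁ : K) : (jacobian 0 0 0 0 x₀ x₁ 0 0).rank ≤ 2 :=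
  rank_le_card_of_col_support_subset _ {6, 7} <| Function.support_subset_iff'.mpr fun j hj => by
    fin_cases j <;> simp at hj ⊢ <;> ext i <;> fin_cases i <;> simp [jacobian]

end Satake

open Satake

theorem satake_singular_locus (K : Type*) [Field K] (hK : ringChar K ≠ 2)
    (y₀ y₁ y₂ y₃ x₀ x₁ x₂ x₃ : K)
    (h0 : y₀ ^ 2 = 2 * (x₀ * x₃ + x₁ * x₂))
    (h1 : y₁ ^ 2 = 2 * (x₀ * x₃ - x₁ * x₂))
    (h2 : y₂ ^ 2 = 2 * (x₀ * x₂ - x₁ * x₃))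
    (h3 : y₃ ^ 2 = 2 * (x₀ * x₂ + x₁ * x₃)) :
    (!![2 * y₀, 0, 0, 0, -2 * x₃, -2 * x₂, -2 * x₁, -2 * x₀;
        0, 2 * y₁, 0, 0, -2 * x₃, 2 * x₂, 2 * x₁, -2 * x₀;
        0, 0, 2 * y₂, 0, -2 * x₂, 2 * x₃, -2 * x₀, 2 * x₁;
        0, 0, 0, 2 * y₃, -2 * x₂, -2 * x₃, -2 * x₀, -2 * x₁] : Matrix (Fin 4) (Fin 8) K).rank
        < 4 ↔
      (y₀ = 0 ∧ y₁ = 0 ∧ y₂ = 0 ∧ y₃ = 0 ∧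
        ((x₀ = 0 ∧ x₁ = 0) ∨ (x₂ = 0 ∧ x₃ = 0))) := by
  have two : (2 : K) ≠ 0 := Ring.two_ne_zero hK
  change (jacobian y₀ y₁ y₂ y₃ x₀ x₁ x₂ x₃).rank < 4 ↔ _
  constructor
  · intro hrank
    obtain ⟨c, hc0, hc⟩ :=
      exists_vecMul_eq_zero_of_rank_lt (hrank.trans_eq (Fintype.card_fin 4).symm)
    obtain ⟨rfl, rfl, rfl, rfl⟩ := y_eq_zero_of_vecMul_jacobian_eq_zero two h0 h1 h2 h3 hc0 hc
    exact ⟨rfl, rfl, rfl, rfl, x_on_lines_of_quadrics_eq_zero two (by linear_combination -h0)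
      (by linear_combination -h1) (by linear_combination -h2) (by linear_combination -h3)⟩
  · rintro ⟨rfl, rfl, rfl, rfl, ⟨rfl, rfl⟩ | ⟨rfl, rfl⟩⟩
    · exact (rank_jacobian_line₀₁_le x₂ x₃).trans_lt (by norm_num)
    · exact (rank_jacobian_line₂₃_le x₀ x₁).trans_lt (by norm_num)
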